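/- arXiv:0808.0308 — 4 statements merged into one kernel-verified Lean document; each statement's English description precedes it below -/
import Mathlib

section
/- Let G be a torsion-free group in which every abelian subgroup is finitely generated, and suppose every nonidentity element of the center Z(G) is commensurable with a fixed element Δ ∈ G. Then Z(G) is cyclic. -/
/-!
The centre is a finitely generated torsion-free abelian group, hence free abelian of finite rank.
A central element conjugate to `Δ ^ b` equals `Δ ^ b`, so any two nontrivial central elements have
equal nonzero powers; two distinct basis vectors never do, so the rank is at most one.
-/

open Module Subgroup

theorem isAddCyclic_of_forall_exists_zsmul_eq_zsmul {A : Type*} [AddCommGroup A]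
    [Module.Finite ℤ A] [IsAddTorsionFree A]
    (h : ∀ x y : A, x ≠ 0 → y ≠ 0 → ∃ m n : ℤ, m ≠ 0 ∧ n ≠ 0 ∧ m • x = n • y) :
    IsAddCyclic A := by
  let b := Free.chooseBasis ℤ A
  have : Subsingleton (Free.ChooseBasisIndex ℤ A) := by
    refine ⟨fun i j => by_contra fun hij => ?_⟩
    obtain ⟨m, n, hm, -, hmn⟩ := h (b i) (b j) (b.ne_zero i) (b.ne_zero j)
    exact hm (by simpa [hij] using congrArg (b.repr · i) hmn)
  have hrank : Module.rank ℤ A ≤ 1 := by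
    rw [Free.rank_eq_card_chooseBasisIndex]
    exact Cardinal.le_one_iff_subsingleton.2 this
  obtain ⟨v, hv⟩ := rank_le_one_iff.1 hrank
  exact ⟨v, hv⟩

open scoped IsMulCommutative in
theorem isCyclic_of_forall_exists_zpow_eq_zpow {A : Type*} [Group A] [IsMulCommutative A]
    [Group.FG A] [IsMulTorsionFree A]
    (h : ∀ x y : A, x ≠ 1 → y ≠ 1 → ∃ m n : ℤ, m ≠ 0 ∧ n ≠ 0 ∧ x ^ m = y ^ n) :
    IsCyclic A :=
  isAddCyclic_additive_iff.1 <| isAddCyclic_of_forall_exists_zsmul_eq_zsmul fun x y hx hy =>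
    h x.toMul y.toMul hx hy

theorem zpow_mul_eq_zpow_mul_of_isConj_zpow {G : Type*} [Group G] {Δ x y : G}
    (hx : x ∈ center G) (hy : y ∈ center G) {a b c d : ℤ}
    (hxΔ : IsConj (x ^ a) (Δ ^ b)) (hyΔ : IsConj (y ^ c) (Δ ^ d)) :
    x ^ (a * d) = y ^ (c * b) := by
  have hxa : x ^ a = Δ ^ b := hxΔ.eq_of_left_mem_center (zpow_mem hx a)
  have hyc : y ^ c = Δ ^ d := hyΔ.eq_of_left_mem_center (zpow_mem hy c)
  rw [zpow_mul, zpow_mul, hxa, hyc, ← zpow_mul, ← zpow_mul, mul_comm]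

theorem stmt_3 {G : Type*} [Group G] (htf : ∀ g : G, g ≠ 1 → ¬IsOfFinOrder g)
    (hfg : ∀ H : Subgroup G, (∀ a ∈ H, ∀ b ∈ H, a * b = b * a) → H.FG)
    (Δ : G)
    (hcom : ∀ g ∈ Subgroup.center G, g ≠ 1 →
      ∃ a b : ℤ, a ≠ 0 ∧ b ≠ 0 ∧ IsConj (g ^ a) (Δ ^ b)) :
    IsCyclic (Subgroup.center G) := by
  have : Group.FG (center G) :=
    (Group.fg_iff_subgroup_fg _).2 <| hfg _ fun a _ b hb => mem_center_iff.1 hb a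
  have : IsMulTorsionFree (center G) := by
    open scoped IsMulCommutative in
    exact isMulTorsionFree_iff_not_isOfFinOrder.2 fun g hg hfin =>
      htf g (by simpa using hg) (Submonoid.isOfFinOrder_coe.2 hfin)
  refine isCyclic_of_forall_exists_zpow_eq_zpow fun x y hx hy => ?_
  obtain ⟨a, b, ha, hb, hxΔ⟩ := hcom x x.2 (by simpa using hx)
  obtain ⟨c, d, hc, hd, hyΔ⟩ := hcom y y.2 (by simpa using hy)
  exact ⟨a * d, c * b, mul_ne_zero ha hd, mul_ne_zero hc hb,
    Subtype.ext (by simpa using zpow_mul_eq_zpow_mul_of_isConj_zpow x.2 y.2 hxΔ hyΔ)⟩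
end

section
/- Let G be a group, Δ ∈ G with Δ^m central in G for some m ≥ 1, and suppose g ∈ G is periodic, i.e., g^q is conjugate to Δ^p for some q ≥ 1 and p ∈ ℤ with gcd(p,q) = 1, and q is minimal with the property that some power Δ^j is conjugate to g^q. Then for any integer k, g^k is conjugate to a power of Δ if and only if q divides k. -/
private lemma arith_aux {N mt q k P : ℕ} (hN : N ≠ 0) (hmt : mt ≠ 0) (hq : q ≠ 0) (hk : k ≠ 0)
    (hcop : Nat.Coprime P q)
    (hNe : N = q * (mt / Nat.gcd mt P))
    (hdvd : N / Nat.gcd N k ∣ mt) : q ∣ k := by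
  rw [← Nat.factorization_le_iff_dvd hq hk]
  rw [Finsupp.le_iff]
  intro ℓ hℓ
  rw [Nat.support_factorization, Nat.mem_primeFactors] at hℓ
  obtain ⟨hℓp, hℓq, -⟩ := hℓ
  have hℓP : ¬ ℓ ∣ P := by
    intro h
    have h1 : ℓ ∣ Nat.gcd P q := Nat.dvd_gcd h hℓq
    rw [hcop] at h1
    exact hℓp.ne_one (Nat.dvd_one.mp h1)
  -- valuation of N
  have hgcd1 : Nat.gcd mt P ∣ mt := Nat.gcd_dvd_left _ _
  have hgne : Nat.gcd mt P ≠ 0 := fun h => hmt (Nat.eq_zero_of_gcd_eq_zero_left h)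
  have hdivne : mt / Nat.gcd mt P ≠ 0 :=
    (Nat.div_pos (Nat.le_of_dvd (Nat.pos_of_ne_zero hmt) hgcd1) (Nat.pos_of_ne_zero hgne)).ne'
  have hvgcdP : (Nat.gcd mt P).factorization ℓ = 0 :=
    Nat.factorization_eq_zero_of_not_dvd (fun h => hℓP (h.trans (Nat.gcd_dvd_right mt P)))
  have hvN : N.factorization ℓ = q.factorization ℓ + mt.factorization ℓ := by
    rw [hNe, Nat.factorization_mul hq hdivne, Finsupp.add_apply,
      Nat.factorization_div hgcd1, Finsupp.tsub_apply, hvgcdP, Nat.sub_zero]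
  -- from hdvd
  have hgNk : Nat.gcd N k ∣ N := Nat.gcd_dvd_left _ _
  have hgNkne : Nat.gcd N k ≠ 0 := fun h => hN (Nat.eq_zero_of_gcd_eq_zero_left h)
  have hndne : N / Nat.gcd N k ≠ 0 :=
    (Nat.div_pos (Nat.le_of_dvd (Nat.pos_of_ne_zero hN) hgNk) (Nat.pos_of_ne_zero hgNkne)).ne'
  have h2 : N.factorization ℓ - (Nat.gcd N k).factorization ℓ ≤ mt.factorization ℓ := by
    have h3 := (Nat.factorization_le_iff_dvd hndne hmt).mpr hdvd
    have h4 := Finsupp.le_def.mp h3 ℓ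
    rwa [Nat.factorization_div hgNk, Finsupp.tsub_apply] at h4
  have h5 : (Nat.gcd N k).factorization ℓ ≤ k.factorization ℓ :=
    Finsupp.le_def.mp
      ((Nat.factorization_le_iff_dvd hgNkne hk).mpr (Nat.gcd_dvd_right N k)) ℓ
  omega

theorem stmt_5 {G : Type*} [Group G] (Δ : G) (m : ℕ) (hm : 1 ≤ m)
    (hcen : Δ ^ m ∈ Subgroup.center G) (g : G) (p : ℤ) (q : ℕ) (hq : 1 ≤ q)
    (hgcd : Int.gcd p q = 1)
    (hper : IsConj (g ^ (q : ℤ)) (Δ ^ p))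
    (hmin : ∀ q' : ℕ, 1 ≤ q' → (∃ j : ℤ, IsConj (g ^ (q' : ℤ)) (Δ ^ j)) → q ≤ q') :
    ∀ k : ℤ, (∃ j : ℤ, IsConj (g ^ k) (Δ ^ j)) ↔ (q : ℤ) ∣ k := by
  intro k
  constructor
  · rintro ⟨j, hj⟩
    rcases eq_or_ne k 0 with rfl | hk0
    · exact dvd_zero _
    by_cases hq1 : q = 1
    · rw [hq1]; exact_mod_cast one_dvd k
    have hp0 : p ≠ 0 := by
      rintro rfl
      rw [Int.gcd_zero_left] at hgcd
      exact hq1 (by simpa using hgcd)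
    by_cases hfin : IsOfFinOrder Δ
    · -- finite order case
      obtain ⟨c, hc⟩ := isConj_iff.mp hper
      set g' := c * g * c⁻¹ with hg'
      have hg'q : g' ^ (q : ℤ) = Δ ^ p := by rw [hg', conj_zpow, hc]
      have hgg' : ∀ a : ℤ, IsConj (g ^ a) (g' ^ a) := fun a =>
        isConj_iff.mpr ⟨c, by rw [hg', conj_zpow]⟩
      set mt := orderOf Δ with hmtdef
      have hmt0 : mt ≠ 0 := hfin.orderOf_pos.ne'
      have hΔmt : Δ ^ mt = 1 := pow_orderOf_eq_one Δ
      have hΔzmt : ∀ i : ℤ, (Δ ^ i) ^ mt = 1 := by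
        intro i
        rw [← zpow_natCast (Δ ^ i) mt, ← zpow_mul, mul_comm, zpow_mul, zpow_natCast, hΔmt,
          one_zpow]
      have hg'fin : IsOfFinOrder g' := by
        refine isOfFinOrder_iff_pow_eq_one.mpr ⟨q * mt, by positivity, ?_⟩
        rw [pow_mul, ← zpow_natCast g' q, hg'q, hΔzmt]
      set N := orderOf g' with hNdef
      have hN0 : N ≠ 0 := hg'fin.orderOf_pos.ne'
      have hg'N : g' ^ (N : ℤ) = 1 := by
        rw [zpow_natCast]; exact pow_orderOf_eq_one g'
      -- q ∣ N via minimality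
      have hqN : q ∣ N := by
        set d := Nat.gcd N q with hd
        have hdq : d ∣ q := Nat.gcd_dvd_right N q
        have hd1 : 1 ≤ d := Nat.pos_of_ne_zero (fun h => hq1 (by
          have := Nat.eq_zero_of_gcd_eq_zero_right h
          omega))
        have hbez : (d : ℤ) = N * Int.gcdA N q + q * Int.gcdB N q := by
          have h := Int.gcd_eq_gcd_ab (N : ℤ) (q : ℤ)
          simpa using h
        have hgd : g' ^ (d : ℤ) = Δ ^ (p * Int.gcdB N q) := by
          rw [hbez, zpow_add, zpow_mul, zpow_mul, hg'N, hg'q, one_zpow, one_mul, ← zpow_mul]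
        have hconjd : IsConj (g ^ ((d : ℕ) : ℤ)) (Δ ^ (p * Int.gcdB N q)) :=
          (hgg' d).trans (by rw [hgd])
        have hqle : q ≤ d := hmin d hd1 ⟨_, hconjd⟩
        have hdeq : d = q := le_antisymm (Nat.le_of_dvd (by omega) hdq) hqle
        rw [← hdeq]
        exact Nat.gcd_dvd_left N q
      -- order of Δ ^ p
      have hordp : orderOf (Δ ^ p) = mt / Nat.gcd mt p.natAbs := by
        rcases Int.natAbs_eq p with hp | hp
        · conv_lhs => rw [hp]
          rw [zpow_natCast, orderOf_pow' Δ (Int.natAbs_ne_zero.mpr hp0), Nat.gcd_comm]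
        · conv_lhs => rw [hp]
          rw [zpow_neg, zpow_natCast, orderOf_inv,
            orderOf_pow' Δ (Int.natAbs_ne_zero.mpr hp0), Nat.gcd_comm]
      -- N = q * (mt / gcd mt |p|)
      have hNq : N = q * (mt / Nat.gcd mt p.natAbs) := by
        have h1 : orderOf (g' ^ (q : ℕ)) = N / Nat.gcd N q := orderOf_pow' g' (by omega)
        have h2 : g' ^ (q : ℕ) = Δ ^ p := by rw [← zpow_natCast, hg'q]
        have h3 : Nat.gcd N q = q := by
          rw [Nat.gcd_comm]; exact Nat.gcd_eq_left hqN
        rw [h2, hordp, h3] at h1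
        rw [h1, Nat.mul_div_cancel' hqN]
      -- the given k
      have hconjk : IsConj (g' ^ k) (Δ ^ j) := (hgg' k).symm.trans hj
      obtain ⟨u, hu⟩ := hconjk
      have hordk : orderOf (g' ^ k) = orderOf (Δ ^ j) := SemiconjBy.orderOf_eq (↑u) hu
      have hknat : orderOf (g' ^ k) = N / Nat.gcd N k.natAbs := by
        rcases Int.natAbs_eq k with hk | hk
        · conv_lhs => rw [hk]
          rw [zpow_natCast, orderOf_pow' g' (Int.natAbs_ne_zero.mpr hk0)]
        · conv_lhs => rw [hk]
          rw [zpow_neg, zpow_natCast, orderOf_inv, orderOf_pow' g' (Int.natAbs_ne_zero.mpr hk0)]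
      have hjdvd : orderOf (Δ ^ j) ∣ mt := orderOf_dvd_of_pow_eq_one (hΔzmt j)
      have hdvdm : N / Nat.gcd N k.natAbs ∣ mt := by
        rw [← hknat, hordk]; exact hjdvd
      have hcop : Nat.Coprime p.natAbs q := by
        have : Int.gcd p (q : ℤ) = Nat.gcd p.natAbs q := by
          rw [Int.gcd]; simp
        rwa [this] at hgcd
      have hqk : q ∣ k.natAbs :=
        arith_aux hN0 hmt0 (by omega) (by simpa using hk0) hcop hNq hdvdm
      exact dvd_trans (Int.natCast_dvd_natCast.mpr hqk) (Int.natAbs_dvd.mpr dvd_rfl)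
    · -- infinite order case
      obtain ⟨y, hy⟩ := isConj_iff.mp hj
      obtain ⟨c, hc⟩ := isConj_iff.mp hper
      have hinj : Function.Injective fun n : ℤ => Δ ^ n :=
        injective_zpow_iff_not_isOfFinOrder.mpr hfin
      have hz : ∀ i : ℤ, Δ ^ (i * m) ∈ Subgroup.center G := by
        intro i
        have h : Δ ^ (i * (m : ℤ)) = (Δ ^ m) ^ i := by
          rw [← zpow_natCast Δ m, ← zpow_mul, mul_comm]
        rw [h]
        exact Subgroup.zpow_mem _ hcen i
      have key : ∀ (a b : ℤ) (w : G), w * g ^ a * w⁻¹ = Δ ^ b → g ^ (a * m) = Δ ^ (b * m) := by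
        intro a b w hw
        have h1 : w * g ^ (a * m) * w⁻¹ = Δ ^ (b * m) := by
          rw [zpow_mul, zpow_mul, ← hw, conj_zpow]
        have h2 := hz b
        rw [Subgroup.mem_center_iff] at h2
        calc g ^ (a * (m : ℤ)) = w⁻¹ * (w * g ^ (a * (m : ℤ)) * w⁻¹) * w := by group
          _ = w⁻¹ * Δ ^ (b * (m : ℤ)) * w := by rw [h1]
          _ = Δ ^ (b * (m : ℤ)) * w⁻¹ * w := by rw [← h2 w⁻¹]
          _ = Δ ^ (b * (m : ℤ)) := by group
      have e1 := key k j y hy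
      have e2 := key q p c hc
      have e3 : Δ ^ (j * m * q) = Δ ^ (p * m * k) := by
        calc Δ ^ (j * (m : ℤ) * q) = (Δ ^ (j * (m : ℤ))) ^ (q : ℤ) := by rw [← zpow_mul]
          _ = (g ^ (k * (m : ℤ))) ^ (q : ℤ) := by rw [e1]
          _ = g ^ (k * (m : ℤ) * q) := by rw [← zpow_mul]
          _ = g ^ ((q : ℤ) * m * k) := by ring_nf
          _ = (g ^ ((q : ℤ) * m)) ^ k := by rw [← zpow_mul]
          _ = (Δ ^ (p * (m : ℤ))) ^ k := by rw [e2]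
          _ = Δ ^ (p * (m : ℤ) * k) := by rw [← zpow_mul]
      have e4 : j * (m : ℤ) * q = p * m * k := hinj e3
      have hm0 : (m : ℤ) ≠ 0 := by exact_mod_cast (by omega : m ≠ 0)
      have e5 : j * q = p * k := by
        have h : (m : ℤ) * (j * q) = m * (p * k) := by ring_nf; ring_nf at e4; linarith
        exact mul_left_cancel₀ hm0 h
      have hqpk : (q : ℤ) ∣ p * k := ⟨j, by linarith⟩
      have hcop : IsCoprime (q : ℤ) p := (Int.isCoprime_iff_gcd_eq_one.mpr hgcd).symm
      exact hcop.dvd_of_dvd_mul_left hqpk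
  · rintro ⟨t, rfl⟩
    obtain ⟨c, hc⟩ := isConj_iff.mp hper
    refine ⟨p * t, isConj_iff.mpr ⟨c, ?_⟩⟩
    rw [zpow_mul, zpow_mul, ← hc, conj_zpow]
end

section
/- In the group G = ⟨x, y | x^a = y^a⟩ with a ≥ 2, the elements x and y are not conjugate. -/
/-- The single relation `x^a = y^a` on two generators. -/
def torusRels (a : ℕ) : Set (FreeGroup (Fin 2)) :=
  {FreeGroup.of 0 ^ a * (FreeGroup.of 1 ^ a)⁻¹}

theorem stmt_7 (a : ℕ) (ha : 2 ≤ a) :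
    ¬ IsConj (PresentedGroup.of 0 : PresentedGroup (torusRels a))
      (PresentedGroup.of 1) := by
  intro hconj
  -- map to the abelian group ZMod (a^2), sending x ↦ 1, y ↦ a+1
  set A := Multiplicative (ZMod (a ^ 2))
  have : NeZero (a ^ 2) := ⟨by positivity⟩
  let f : Fin 2 → A := fun i => if i = 0 then Multiplicative.ofAdd 1
    else Multiplicative.ofAdd ((a : ZMod (a ^ 2)) + 1)
  have hf : ∀ r ∈ torusRels a, FreeGroup.lift f r = 1 := by
    intro r hr
    simp only [torusRels, Set.mem_singleton_iff] at hr
    subst hr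
    simp only [map_mul, map_inv, map_pow, FreeGroup.lift_apply_of, f,
      if_true, eq_self_iff_true, if_neg (by decide : ¬ (1 : Fin 2) = 0)]
    rw [← ofAdd_nsmul, ← ofAdd_nsmul, ← ofAdd_neg, ← ofAdd_add, ← ofAdd_zero]
    congr 1
    simp only [nsmul_eq_mul, mul_one, mul_add]
    rw [← Nat.cast_mul, ← pow_two, ZMod.natCast_self]
    ring
  let φ : PresentedGroup (torusRels a) →* A := PresentedGroup.toGroup hf
  obtain ⟨c, hc⟩ := hconj
  have hmap : φ c * φ (PresentedGroup.of 0) = φ (PresentedGroup.of 1) * φ c := by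
    rw [← map_mul, ← map_mul, hc.eq]
  have this : φ (PresentedGroup.of 0) = φ (PresentedGroup.of 1) :=
    mul_left_cancel (a := φ c) (by rw [hmap, mul_comm])
  have h0 : φ (PresentedGroup.of 0) = Multiplicative.ofAdd 1 := PresentedGroup.toGroup.of hf
  have h1 : φ (PresentedGroup.of 1) = Multiplicative.ofAdd ((a : ZMod (a ^ 2)) + 1) := by
    rw [PresentedGroup.toGroup.of hf]; simp [f]
  rw [h0, h1] at this
  have := Multiplicative.ofAdd.injective this
  have ha0 : (a : ZMod (a ^ 2)) = 0 := by linear_combination -this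
  rw [ZMod.natCast_eq_zero_iff] at ha0
  have := Nat.le_of_dvd (by omega) ha0
  nlinarith
end

section
/- Let G be a group, Δ ∈ G with Δ^m central (m ≥ 1), and let H be an abelian subgroup of G such that every h ∈ H satisfies h^{q_h·m} = Δ^{p_h·m} for some coprime integers p_h ∈ ℤ, q_h ≥ 1. Define φ : H → ℚ by φ(h) = p_h/q_h. Then φ is a group homomorphism. -/
theorem stmt_10 {G : Type*} [Group G] (Δ : G)
    (hΔ : ∀ n : ℤ, Δ ^ n = 1 → n = 0) (m : ℤ) (hm : 1 ≤ m)
    (hcen : Δ ^ m ∈ Subgroup.center G)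
    (H : Subgroup G) (hab : ∀ a ∈ H, ∀ b ∈ H, a * b = b * a)
    (p : H → ℤ) (q : H → ℤ) (hq : ∀ h : H, 1 ≤ q h)
    (hcop : ∀ h : H, Int.gcd (p h) (q h) = 1)
    (heq : ∀ h : H, (h : G) ^ (q h * m) = Δ ^ (p h * m)) :
    ∀ h₁ h₂ : H,
      (p (h₁ * h₂) : ℚ) / (q (h₁ * h₂) : ℚ) =
        (p h₁ : ℚ) / (q h₁ : ℚ) + (p h₂ : ℚ) / (q h₂ : ℚ) := by
  intro h₁ h₂
  set h : H := h₁ * h₂ with hh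
  have hcomm : Commute ((h₁ : G)) ((h₂ : G)) := hab _ h₁.2 _ h₂.2
  -- key group identity
  have key : Δ ^ (p h * m * (q h₁ * q h₂)) =
      Δ ^ ((p h₁ * q h₂ + p h₂ * q h₁) * (q h * m)) := by
    have e1 : ((h : G)) ^ (q h * m * (q h₁ * q h₂)) =
        Δ ^ (p h * m * (q h₁ * q h₂)) := by
      rw [zpow_mul, heq, ← zpow_mul]
    have e2 : ((h : G)) = (h₁ : G) * (h₂ : G) := rfl
    rw [← e1, e2, hcomm.mul_zpow]
    have f1 : (h₁ : G) ^ (q h * m * (q h₁ * q h₂)) =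
        Δ ^ (p h₁ * m * (q h * q h₂)) := by
      rw [show q h * m * (q h₁ * q h₂) = q h₁ * m * (q h * q h₂) by ring,
        zpow_mul, heq, ← zpow_mul]
    have f2 : (h₂ : G) ^ (q h * m * (q h₁ * q h₂)) =
        Δ ^ (p h₂ * m * (q h * q h₁)) := by
      rw [show q h * m * (q h₁ * q h₂) = q h₂ * m * (q h * q h₁) by ring,
        zpow_mul, heq, ← zpow_mul]
    rw [f1, f2, ← zpow_add]
    congr 1
    ring
  have hexp : p h * m * (q h₁ * q h₂) =
      (p h₁ * q h₂ + p h₂ * q h₁) * (q h * m) := by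
    have := hΔ (p h * m * (q h₁ * q h₂) - (p h₁ * q h₂ + p h₂ * q h₁) * (q h * m))
      (by rw [zpow_sub, key, mul_inv_cancel])
    omega
  have hm0 : m ≠ 0 := by omega
  have hint : p h * (q h₁ * q h₂) = (p h₁ * q h₂ + p h₂ * q h₁) * q h := by
    have : m * (p h * (q h₁ * q h₂)) = m * ((p h₁ * q h₂ + p h₂ * q h₁) * q h) := by
      linarith [hexp]
    exact mul_left_cancel₀ hm0 this
  have q0 : (q h : ℚ) ≠ 0 := by
    have := hq h; exact_mod_cast (by omega : q h ≠ 0)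
  have q1 : (q h₁ : ℚ) ≠ 0 := by
    have := hq h₁; exact_mod_cast (by omega : q h₁ ≠ 0)
  have q2 : (q h₂ : ℚ) ≠ 0 := by
    have := hq h₂; exact_mod_cast (by omega : q h₂ ≠ 0)
  field_simp
  have hq' : ((p h : ℚ)) * (q h₁ * q h₂) = (p h₁ * q h₂ + p h₂ * q h₁) * q h := by
    exact_mod_cast hint
  linear_combination hq'
end
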